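/- arXiv:2506.03715 — 2 statements merged into one kernel-verified Lean document; each statement's English description precedes it below -/
import Mathlib

section
/- Let Ω ⊆ ℝ^k be a bounded open set, let s ∈ (0,1), and let ε > 0. Then there exists a compact set 𝔠 ⊆ Ω such that ℒ^k(Ω \ 𝔠) ≤ ε ℒ^k(Ω) (in particular ℒ^k(𝔠) > 0) and the characteristic function 𝟙_𝔠 belongs to W^{s,1}(Ω). -/
noncomputable section
open MeasureTheory Set Module Filter Metric
open scoped ENNReal NNReal Topology

/-- `ℝⁿ` with the Euclidean norm. -/
abbrev Euc (n : ℕ) : Type := EuclideanSpace ℝ (Fin n)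

/-- Fractional Sobolev (Slobodeckij) double-integral quantity
`[u]_{W^{s,p}}^p = ∫∫ ‖u x − u y‖^p / dist(x,y)^{sp+d} dμ dμ`. -/
def fracPow {X : Type*} [PseudoEMetricSpace X] [MeasurableSpace X]
    {F : Type*} [NormedAddCommGroup F]
    (d s p : ℝ) (μ : Measure X) (u : X → F) : ℝ≥0∞ :=
  ∫⁻ x, ∫⁻ y, ENNReal.ofReal (‖u x - u y‖ ^ p) / edist x y ^ (s * p + d) ∂μ ∂μ

/-- Membership in the fractional Sobolev space `W^{s,1}(Ω)` for `Ω ⊆ ℝᵏ`. -/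
def MemWs1 {k : ℕ} (s : ℝ) (Ω : Set (Euc k)) (u : Euc k → ℝ) : Prop :=
  MemLp u 1 (volume.restrict Ω) ∧ fracPow (k : ℝ) s 1 (volume.restrict Ω) u < ∞

lemma ofReal_norm_eq_coe_nnnorm {E : Type*} [SeminormedAddGroup E] (a : E) :
    ENNReal.ofReal ‖a‖ = (‖a‖₊ : ℝ≥0∞) := ENNReal.ofReal_eq_coe_nnreal _

lemma edist_eq_coe_nnnorm_sub {E : Type*} [SeminormedAddCommGroup E] (a b : E) :
    edist a b = (‖a - b‖₊ : ℝ≥0∞) := by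
  rw [edist_dist, dist_eq_norm, ofReal_norm_eq_coe_nnnorm]

lemma pow_sub_pow_le' {a b : ℝ} (n : ℕ) (hb : 0 ≤ b) (hba : b ≤ a) :
    a ^ n - b ^ n ≤ n * a ^ (n - 1) * (a - b) := by
  have ha : 0 ≤ a := hb.trans hba
  rw [← geom_sum₂_mul a b n]
  have hsum : (∑ i ∈ Finset.range n, a ^ i * b ^ (n - 1 - i)) ≤ n * a ^ (n - 1) := by
    calc (∑ i ∈ Finset.range n, a ^ i * b ^ (n - 1 - i))
        ≤ ∑ i ∈ Finset.range n, a ^ (n - 1) := by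
          refine Finset.sum_le_sum fun i hi => ?_
          have hib : b ^ (n - 1 - i) ≤ a ^ (n - 1 - i) := pow_le_pow_left₀ hb hba _
          calc a ^ i * b ^ (n - 1 - i) ≤ a ^ i * a ^ (n - 1 - i) := by
                exact mul_le_mul_of_nonneg_left hib (pow_nonneg ha _)
            _ = a ^ (i + (n - 1 - i)) := (pow_add a _ _).symm
            _ = a ^ (n - 1) := by
                congr 1
                have := Finset.mem_range.1 hi
                omega
      _ = n * a ^ (n - 1) := by simp [Finset.sum_const, mul_comm]
  exact mul_le_mul_of_nonneg_right hsum (sub_nonneg.2 hba)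

lemma nontrivial_euc {k : ℕ} (hk : 0 < k) : Nontrivial (Euc k) := by
  have : Nontrivial (Fin k → ℝ) := by
    have : Nonempty (Fin k) := ⟨⟨0, hk⟩⟩
    infer_instance
  infer_instance

/-- bound for the measure of an annulus of half-width `δ` around the sphere of radius `r`. -/
lemma annulus_bound {k : ℕ} (c : Euc k) {r δ : ℝ} (hr : 0 < r) (hδ : 0 < δ) (hδ1 : δ ≤ 1) :
    volume {x : Euc k | |‖x - c‖ - r| ≤ δ} ≤
      ENNReal.ofReal (((k : ℝ) * (r + 1) ^ (k - 1) * 2 + 2 ^ k + 1 / r) * δ) *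
        volume (ball (0 : Euc k) 1) := by
  have hfr : finrank ℝ (Euc k) = k := finrank_euclideanSpace_fin
  have hvne : volume (ball (0 : Euc k) 1) ≠ ∞ := measure_ball_lt_top.ne
  rcases le_or_gt r δ with hrδ | hδr
  · -- δ ≥ r : crude bound by the big ball
    have h1 : {x : Euc k | |‖x - c‖ - r| ≤ δ} ⊆ closedBall c (r + δ) := by
      intro x hx
      simp only [mem_setOf_eq] at hx
      have := abs_le.1 hx
      simp only [mem_closedBall, dist_eq_norm]
      linarith [this.2]
    calc volume {x : Euc k | |‖x - c‖ - r| ≤ δ} ≤ volume (closedBall c (r + δ)) :=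
          measure_mono h1
      _ = ENNReal.ofReal ((r + δ) ^ k) * volume (ball (0 : Euc k) 1) := by
          rw [Measure.addHaar_closedBall volume c (by positivity), hfr]
      _ ≤ _ := by
          gcongr
          rcases Nat.eq_zero_or_pos k with hk | hk
          · subst hk
            simp only [pow_zero]
            have : (1 : ℝ) ≤ 1 / r * δ := by
              rw [div_mul_eq_mul_div, one_mul, le_div_iff₀ hr]
              linarith
            nlinarith [sq_nonneg δ]
          · have h2 : (r + δ) ^ k ≤ (2 * δ) ^ k := by
              apply pow_le_pow_left₀ (by positivity)
              linarith
            have h3 : (2 * δ) ^ k = 2 ^ k * δ ^ k := mul_pow 2 δ k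
            have h4 : δ ^ k ≤ δ := by
              calc δ ^ k ≤ δ ^ 1 := pow_le_pow_of_le_one hδ.le hδ1 hk
                _ = δ := pow_one δ
            have hnn : (0:ℝ) ≤ (k : ℝ) * (r + 1) ^ (k - 1) * 2 * δ := by positivity
            have : (2:ℝ) ^ k * δ ^ k ≤ 2 ^ k * δ :=
              mul_le_mul_of_nonneg_left h4 (by positivity)
            have h5 : (0:ℝ) ≤ 1 / r * δ := by positivity
            nlinarith
  · -- δ < r : annulus is contained in a shell
    rcases Nat.eq_zero_or_pos k with hk | hk
    · -- k = 0 : annulus is empty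
      subst hk
      have : {x : Euc 0 | |‖x - c‖ - r| ≤ δ} = ∅ := by
        ext x
        simp only [mem_setOf_eq, mem_empty_iff_false, iff_false, not_le]
        have : x - c = 0 := Subsingleton.elim _ _
        rw [this]
        simp only [norm_zero, zero_sub, abs_neg, abs_of_pos hr]
        exact hδr
      rw [this]
      simp
    · haveI : Nontrivial (Euc k) := nontrivial_euc hk
      have hsub : {x : Euc k | |‖x - c‖ - r| ≤ δ} ⊆
          closedBall c (r + δ) \ ball c (r - δ) := by
        intro x hx
        simp only [mem_setOf_eq] at hx
        have h := abs_le.1 hx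
        constructor
        · simp only [mem_closedBall, dist_eq_norm]; linarith [h.2]
        · simp only [mem_ball, dist_eq_norm, not_lt]; linarith [h.1]
      have hmb : volume (ball c (r - δ)) ≠ ∞ := measure_ball_lt_top.ne
      calc volume {x : Euc k | |‖x - c‖ - r| ≤ δ}
          ≤ volume (closedBall c (r + δ) \ ball c (r - δ)) := measure_mono hsub
        _ = volume (closedBall c (r + δ)) - volume (ball c (r - δ)) :=
            measure_diff (ball_subset_closedBall.trans
              (closedBall_subset_closedBall (by linarith))) measurableSet_ball.nullMeasurableSet hmb
        _ = ENNReal.ofReal ((r + δ) ^ k) * volume (ball (0 : Euc k) 1)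
            - ENNReal.ofReal ((r - δ) ^ k) * volume (ball (0 : Euc k) 1) := by
            rw [Measure.addHaar_closedBall volume c (by positivity),
              Measure.addHaar_ball volume c (by linarith), hfr]
        _ = (ENNReal.ofReal ((r + δ) ^ k) - ENNReal.ofReal ((r - δ) ^ k))
              * volume (ball (0 : Euc k) 1) := by
            rw [ENNReal.sub_mul fun _ _ => hvne]
        _ = ENNReal.ofReal ((r + δ) ^ k - (r - δ) ^ k) * volume (ball (0 : Euc k) 1) := by
            rw [ENNReal.ofReal_sub _ (pow_nonneg (by linarith) k)]
        _ ≤ _ := by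
            gcongr
            have hb : (0:ℝ) ≤ r - δ := by linarith
            have := pow_sub_pow_le' (a := r + δ) (b := r - δ) k hb (by linarith)
            have h2 : (r + δ) ^ (k - 1) ≤ (r + 1) ^ (k - 1) :=
              pow_le_pow_left₀ (by positivity) (by linarith) _
            have h3 : (k:ℝ) * (r + δ) ^ (k-1) * (r + δ - (r - δ)) ≤ (k:ℝ) * (r+1)^(k-1) * (2*δ) := by
              have : r + δ - (r - δ) = 2 * δ := by ring
              rw [this]
              gcongr
            have h5 : (0:ℝ) ≤ (2 ^ k + 1 / r) * δ := by positivity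
            nlinarith

/-- tail integrand -/
def tailFun (k : ℕ) (E t : ℝ) : Euc k → ℝ≥0∞ :=
  {z : Euc k | t ≤ ‖z‖}.indicator (fun z => (‖z‖₊ : ℝ≥0∞) ^ (-E))

lemma tailFun_measurable (k : ℕ) (E t : ℝ) : Measurable (tailFun k E t) := by
  unfold tailFun
  apply Measurable.indicator
  · exact (measurable_nnnorm.coe_nnreal_ennreal).pow_const _
  · exact measurable_norm measurableSet_Ici

def Phi (k : ℕ) (E t : ℝ) : ℝ≥0∞ := ∫⁻ z : Euc k, tailFun k E t z

lemma Phi_one_lt_top {k : ℕ} {E : ℝ} (hE : (k : ℝ) < E) : Phi k E 1 < ∞ := by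
  have hfr : finrank ℝ (Euc k) = k := finrank_euclideanSpace_fin
  have hbound : ∀ z : Euc k, tailFun k E 1 z ≤
      ENNReal.ofReal (2 ^ E) * ENNReal.ofReal ((1 + ‖z‖) ^ (-E)) := by
    intro z
    unfold tailFun
    by_cases hz : z ∈ {z : Euc k | (1:ℝ) ≤ ‖z‖}
    · rw [indicator_of_mem hz]
      have hz1 : (1:ℝ) ≤ ‖z‖ := hz
      have hzpos : (0:ℝ) < ‖z‖ := lt_of_lt_of_le one_pos hz1
      have hcast : (‖z‖₊ : ℝ≥0∞) = ENNReal.ofReal ‖z‖ := (ofReal_norm_eq_coe_nnnorm z).symm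
      rw [hcast, ENNReal.ofReal_rpow_of_pos hzpos, ← ENNReal.ofReal_mul (by positivity)]
      apply ENNReal.ofReal_le_ofReal
      have h1 : (1:ℝ) + ‖z‖ ≤ 2 * ‖z‖ := by linarith
      have h2 : (2 * ‖z‖) ^ (-E) ≤ (1 + ‖z‖) ^ (-E) :=
        Real.rpow_le_rpow_of_nonpos (by positivity) h1 (by linarith [hE, Nat.cast_nonneg (α := ℝ) k])
      have h3 : (2 * ‖z‖) ^ (-E) = 2 ^ (-E) * ‖z‖ ^ (-E) :=
        Real.mul_rpow (by norm_num) (norm_nonneg z)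
      have h4 : (2:ℝ) ^ E * 2 ^ (-E) = 1 := by
        rw [← Real.rpow_add (by norm_num)]; simp
      calc ‖z‖ ^ (-E) = 2 ^ E * (2 ^ (-E) * ‖z‖ ^ (-E)) := by
            rw [← mul_assoc, h4, one_mul]
        _ ≤ 2 ^ E * (1 + ‖z‖) ^ (-E) := by
            rw [← h3]
            exact mul_le_mul_of_nonneg_left h2 (by positivity)
    · rw [indicator_of_notMem hz]; exact zero_le
  calc Phi k E 1 ≤ ∫⁻ z : Euc k, ENNReal.ofReal (2 ^ E) * ENNReal.ofReal ((1 + ‖z‖) ^ (-E)) :=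
        lintegral_mono hbound
    _ = ENNReal.ofReal (2 ^ E) * ∫⁻ z : Euc k, ENNReal.ofReal ((1 + ‖z‖) ^ (-E)) :=
        lintegral_const_mul' _ _ ENNReal.ofReal_ne_top
    _ < ∞ := ENNReal.mul_lt_top ENNReal.ofReal_lt_top (by rw [← hfr] at hE; exact finite_integral_one_add_norm hE)

lemma Phi_smul {k : ℕ} {E t : ℝ} (ht : 0 < t) :
    Phi k E t = ENNReal.ofReal t ^ ((k : ℝ) - E) * Phi k E 1 := by
  have hfr : finrank ℝ (Euc k) = k := finrank_euclideanSpace_fin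
  have hmap : Measure.map (t • ·) (volume : Measure (Euc k))
      = ENNReal.ofReal ((t ^ k)⁻¹) • volume := by
    have := Measure.map_addHaar_smul (volume : Measure (Euc k)) (ne_of_gt ht)
    rw [hfr] at this
    rwa [abs_of_pos (by positivity)] at this
  have hvol : (volume : Measure (Euc k))
      = ENNReal.ofReal (t ^ k) • Measure.map (t • ·) (volume : Measure (Euc k)) := by
    rw [hmap, smul_smul, ← ENNReal.ofReal_mul (by positivity),
      mul_inv_cancel₀ (by positivity : (t:ℝ) ^ k ≠ 0)]
    simp
  have hGt : ∀ w : Euc k, tailFun k E t (t • w)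
      = ENNReal.ofReal t ^ (-E) * tailFun k E 1 w := by
    intro w
    have hnorm : ‖t • w‖ = t * ‖w‖ := by
      rw [norm_smul, Real.norm_of_nonneg ht.le]
    have hmem : t • w ∈ {z : Euc k | t ≤ ‖z‖} ↔ w ∈ {z : Euc k | (1:ℝ) ≤ ‖z‖} := by
      simp only [mem_setOf_eq, hnorm]
      constructor
      · intro h; nlinarith
      · intro h; nlinarith
    unfold tailFun
    by_cases hw : w ∈ {z : Euc k | (1:ℝ) ≤ ‖z‖}
    · rw [indicator_of_mem (hmem.2 hw), indicator_of_mem hw]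
      have hwpos : (0:ℝ) < ‖w‖ := lt_of_lt_of_le one_pos hw
      have hc1 : (‖t • w‖₊ : ℝ≥0∞) = ENNReal.ofReal t * ENNReal.ofReal ‖w‖ := by
        rw [← ofReal_norm_eq_coe_nnnorm, hnorm, ENNReal.ofReal_mul ht.le]
      have hc2 : (‖w‖₊ : ℝ≥0∞) = ENNReal.ofReal ‖w‖ := (ofReal_norm_eq_coe_nnnorm w).symm
      rw [hc1, hc2, ENNReal.mul_rpow_of_ne_top (ENNReal.ofReal_ne_top) (ENNReal.ofReal_ne_top)]
    · rw [indicator_of_notMem (fun h => hw (hmem.1 h)), indicator_of_notMem hw, mul_zero]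
  calc Phi k E t = ∫⁻ z : Euc k, tailFun k E t z := rfl
    _ = ENNReal.ofReal (t ^ k) * ∫⁻ z, tailFun k E t z ∂(Measure.map (t • ·) volume) := by
        conv_lhs => rw [hvol]
        rw [lintegral_smul_measure, smul_eq_mul]
    _ = ENNReal.ofReal (t ^ k) * ∫⁻ w : Euc k, tailFun k E t (t • w) := by
        rw [lintegral_map (tailFun_measurable k E t) (measurable_const_smul t)]
    _ = ENNReal.ofReal (t ^ k) * (ENNReal.ofReal t ^ (-E) * Phi k E 1) := by
        congr 1
        simp_rw [hGt]
        refine lintegral_const_mul' _ _ ?_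
        rw [ENNReal.ofReal_rpow_of_pos ht]
        exact ENNReal.ofReal_ne_top
    _ = ENNReal.ofReal t ^ ((k : ℝ) - E) * Phi k E 1 := by
        rw [← mul_assoc]
        congr 1
        rw [ENNReal.ofReal_pow ht.le, ← ENNReal.rpow_natCast, ← ENNReal.rpow_add _ _
          (by simpa using ht) ENNReal.ofReal_ne_top, sub_eq_add_neg]

lemma half_pow_rpow (m : ℕ) (s : ℝ) : (((1:ℝ)/2) ^ m) ^ (-s) = ((2:ℝ) ^ s) ^ m := by
  have h1 : ((1:ℝ)/2) ^ m = ((2:ℝ) ^ (m:ℝ))⁻¹ := by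
    rw [Real.rpow_natCast, one_div, inv_pow]
  rw [h1, ← Real.rpow_neg (by norm_num), ← Real.rpow_mul (by norm_num : (0:ℝ) ≤ 2),
    ← Real.rpow_natCast ((2:ℝ) ^ s) m, ← Real.rpow_mul (by norm_num : (0:ℝ) ≤ 2)]
  congr 1
  ring


lemma outer_fin {k : ℕ} {s r R : ℝ} (hs : 0 < s) (hs1 : s < 1) (hr : 0 < r) (c : Euc k) :
    ∫⁻ x in closedBall c R, ENNReal.ofReal (|‖x - c‖ - r| ^ (-s)) ∂volume < ∞ := by
  set C : ℝ := (k : ℝ) * (r + 1) ^ (k - 1) * 2 + 2 ^ k + 1 / r with hC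
  have hCpos : 0 < C := by positivity
  set t : Euc k → ℝ := fun x => |‖x - c‖ - r| with hT
  have htm : Measurable t := ((continuous_norm.comp (continuous_id.sub continuous_const)).sub
    continuous_const).abs.measurable
  set A : ℕ → Set (Euc k) := fun n => {x | ((1:ℝ)/2) ^ (n+1) < t x ∧ t x ≤ ((1:ℝ)/2) ^ n} with hA
  have hAm : ∀ n, MeasurableSet (A n) :=
    fun n => (htm measurableSet_Ioi).inter (htm measurableSet_Iic)
  set h : ℕ → Euc k → ℝ≥0∞ :=
    fun n => (A n).indicator (fun _ => ENNReal.ofReal (((2:ℝ) ^ s) ^ (n+1))) with hh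
  -- pointwise bound
  have hpt : ∀ x : Euc k, ENNReal.ofReal (t x ^ (-s)) ≤ 1 + ∑' n, h n x := by
    intro x
    have ht0 : 0 ≤ t x := abs_nonneg _
    rcases eq_or_lt_of_le ht0 with h0 | h0
    · rw [← h0, Real.zero_rpow (neg_ne_zero.2 hs.ne'), ENNReal.ofReal_zero]
      exact zero_le
    rcases le_or_gt (t x) 1 with h1 | h1
    · -- 0 < t x ≤ 1
      have hex : ∃ n : ℕ, ((1:ℝ)/2) ^ (n+1) < t x := by
        obtain ⟨m, hm⟩ := exists_pow_lt_of_lt_one h0 (by norm_num : (1:ℝ)/2 < 1)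
        exact ⟨m, lt_of_le_of_lt (pow_le_pow_of_le_one (by norm_num) (by norm_num)
          (Nat.le_succ m)) hm⟩
      set n₀ := Nat.find hex with hn₀
      have hlt : ((1:ℝ)/2) ^ (n₀+1) < t x := Nat.find_spec hex
      have hle : t x ≤ ((1:ℝ)/2) ^ n₀ := by
        rcases Nat.eq_zero_or_pos n₀ with hz | hz
        · rw [hz]; simpa using h1
        · have := Nat.find_min hex (m := n₀ - 1) (by omega)
          push_neg at this
          have heq : n₀ - 1 + 1 = n₀ := by omega
          rwa [heq] at this
      have hmem : x ∈ A n₀ := ⟨hlt, hle⟩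
      have hval : ENNReal.ofReal (t x ^ (-s)) ≤ h n₀ x := by
        rw [hh]
        simp only [indicator_of_mem hmem]
        apply ENNReal.ofReal_le_ofReal
        rw [← half_pow_rpow (n₀+1) s]
        exact Real.rpow_le_rpow_of_nonpos (by positivity) hlt.le (by linarith)
      calc ENNReal.ofReal (t x ^ (-s)) ≤ h n₀ x := hval
        _ ≤ ∑' n, h n x := ENNReal.le_tsum n₀
        _ ≤ 1 + ∑' n, h n x := le_add_self
    · -- t x > 1
      have : t x ^ (-s) ≤ 1 := Real.rpow_le_one_of_one_le_of_nonpos h1.le (by linarith)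
      calc ENNReal.ofReal (t x ^ (-s)) ≤ 1 := by
            simpa using ENNReal.ofReal_le_ofReal this
        _ ≤ 1 + ∑' n, h n x := le_self_add
  -- integrate
  have hint : ∫⁻ x in closedBall c R, ENNReal.ofReal (t x ^ (-s)) ∂volume
      ≤ volume (closedBall c R) + ∑' n, ∫⁻ x, h n x ∂volume := by
    calc ∫⁻ x in closedBall c R, ENNReal.ofReal (t x ^ (-s)) ∂volume
        ≤ ∫⁻ x in closedBall c R, (1 + ∑' n, h n x) ∂volume := lintegral_mono hpt
      _ = (∫⁻ _ in closedBall c R, (1:ℝ≥0∞) ∂volume)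
          + ∫⁻ x in closedBall c R, ∑' n, h n x ∂volume :=
          lintegral_add_left measurable_const _
      _ ≤ volume (closedBall c R) + ∑' n, ∫⁻ x, h n x ∂volume := by
          gcongr
          · simp
          · calc ∫⁻ x in closedBall c R, ∑' n, h n x ∂volume
                ≤ ∫⁻ x, ∑' n, h n x ∂volume := setLIntegral_le_lintegral _ _
              _ = ∑' n, ∫⁻ x, h n x ∂volume := lintegral_tsum (fun n =>
                  ((measurable_const.indicator (hAm n)).aemeasurable))
  -- bound each term
  have hterm : ∀ n, ∫⁻ x, h n x ∂volume ≤
      ENNReal.ofReal ((((2:ℝ)^s) ^ (n+1)) * (C * ((1:ℝ)/2) ^ n)) * volume (ball (0:Euc k) 1) := by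
    intro n
    have : ∫⁻ x, h n x ∂volume = ENNReal.ofReal (((2:ℝ)^s) ^ (n+1)) * volume (A n) := by
      rw [hh, lintegral_indicator_const (hAm n)]
    rw [this]
    have hAsub : A n ⊆ {x : Euc k | |‖x - c‖ - r| ≤ ((1:ℝ)/2) ^ n} := fun x hx => hx.2
    have := (measure_mono hAsub).trans (annulus_bound c hr (by positivity)
      (by apply pow_le_one₀ <;> norm_num))
    calc ENNReal.ofReal (((2:ℝ)^s) ^ (n+1)) * volume (A n)
        ≤ ENNReal.ofReal (((2:ℝ)^s) ^ (n+1)) *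
          (ENNReal.ofReal (C * ((1:ℝ)/2) ^ n) * volume (ball (0:Euc k) 1)) := by
          exact mul_le_mul_right this _
      _ = _ := by
          rw [← mul_assoc, ← ENNReal.ofReal_mul (by positivity)]
  -- sum the geometric series
  have hsum : ∑' n, ∫⁻ x, h n x ∂volume < ∞ := by
    have hq : ((2:ℝ)^s / 2) < 1 := by
      rw [div_lt_one (by norm_num)]
      calc (2:ℝ)^s < 2^(1:ℝ) := Real.rpow_lt_rpow_of_exponent_lt (by norm_num) hs1
        _ = 2 := Real.rpow_one 2
    have hsummable : Summable (fun n : ℕ => (((2:ℝ)^s) ^ (n+1)) * (C * ((1:ℝ)/2) ^ n)) := by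
      have : ∀ n : ℕ, (((2:ℝ)^s) ^ (n+1)) * (C * ((1:ℝ)/2) ^ n)
          = ((2:ℝ)^s * C) * ((2:ℝ)^s/2) ^ n := by
        intro n
        field_simp
        ring
      rw [funext this]
      exact (summable_geometric_of_lt_one (by positivity) hq).mul_left _
    calc ∑' n, ∫⁻ x, h n x ∂volume
        ≤ ∑' n, ENNReal.ofReal ((((2:ℝ)^s) ^ (n+1)) * (C * ((1:ℝ)/2) ^ n)) *
            volume (ball (0:Euc k) 1) := ENNReal.tsum_le_tsum hterm
      _ = (∑' n, ENNReal.ofReal ((((2:ℝ)^s) ^ (n+1)) * (C * ((1:ℝ)/2) ^ n))) *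
            volume (ball (0:Euc k) 1) := ENNReal.tsum_mul_right
      _ < ∞ := by
          apply ENNReal.mul_lt_top _ measure_ball_lt_top
          rw [← ENNReal.ofReal_tsum_of_nonneg (fun n => by positivity) hsummable]
          exact ENNReal.ofReal_lt_top
  exact lt_of_le_of_lt hint (ENNReal.add_lt_top.2 ⟨measure_closedBall_lt_top, hsum⟩)

/-- pointwise + translation bound on the inner integral, for the indicator of a closed ball -/
lemma inner_bound {k : ℕ} (E : ℝ) (c : Euc k) (r : ℝ) (Ω : Set (Euc k)) (x : Euc k) :
    (∫⁻ y in Ω, ENNReal.ofReal ‖(closedBall c r).indicator (fun _ => (1:ℝ)) x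
      - (closedBall c r).indicator (fun _ => (1:ℝ)) y‖ / edist x y ^ E ∂volume)
      ≤ Phi k E (|‖x - c‖ - r|) := by
  set u : Euc k → ℝ := (closedBall c r).indicator (fun _ => (1:ℝ)) with hu
  set t : ℝ := |‖x - c‖ - r| with htt
  have hpt : ∀ y : Euc k, ENNReal.ofReal ‖u x - u y‖ / edist x y ^ E ≤ tailFun k E t (y - x) := by
    intro y
    by_cases h : u x = u y
    · simp [h]
    · -- indicators differ
      have hxy : (x ∈ closedBall c r ∧ y ∉ closedBall c r)
          ∨ (x ∉ closedBall c r ∧ y ∈ closedBall c r) := by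
        by_cases h1 : x ∈ closedBall c r <;> by_cases h2 : y ∈ closedBall c r <;>
          simp [hu, indicator_of_mem, indicator_of_notMem, h1, h2] at h ⊢
      have hdist : t ≤ ‖y - x‖ := by
        have key : ‖(y - c)‖ - ‖(x - c)‖ ≤ ‖y - x‖ ∧ ‖(x - c)‖ - ‖(y - c)‖ ≤ ‖y - x‖ := by
          constructor
          · have := norm_sub_norm_le (y - c) (x - c)
            have h2 : (y - c) - (x - c) = y - x := by abel
            rw [h2] at this; linarith [this]
          · have := norm_sub_norm_le (x - c) (y - c)
            have h2 : (x - c) - (y - c) = x - y := by abel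
            rw [h2] at this
            have h3 : ‖x - y‖ = ‖y - x‖ := norm_sub_rev x y
            linarith
        rcases hxy with ⟨h1, h2⟩ | ⟨h1, h2⟩
        · have hx1 : ‖x - c‖ ≤ r := by rwa [mem_closedBall, dist_eq_norm] at h1
          have hy1 : r < ‖y - c‖ := by
            rw [mem_closedBall, dist_eq_norm, not_le] at h2; exact h2
          rw [htt, abs_of_nonpos (by linarith), neg_sub]
          linarith [key.1]
        · have hx1 : r < ‖x - c‖ := by
            rw [mem_closedBall, dist_eq_norm, not_le] at h1; exact h1
          have hy1 : ‖y - c‖ ≤ r := by rwa [mem_closedBall, dist_eq_norm] at h2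
          rw [htt, abs_of_nonneg (by linarith)]
          linarith [key.2]
      have hnorm1 : ‖u x - u y‖ = 1 := by
        rcases hxy with ⟨h1, h2⟩ | ⟨h1, h2⟩ <;>
          simp [hu, indicator_of_mem, indicator_of_notMem, h1, h2]
      have hmem : y - x ∈ {z : Euc k | t ≤ ‖z‖} := hdist
      rw [hnorm1]
      unfold tailFun
      rw [indicator_of_mem hmem]
      have hedist : edist x y = (‖y - x‖₊ : ℝ≥0∞) := by
        rw [edist_eq_coe_nnnorm_sub, ← ofReal_norm_eq_coe_nnnorm,
          ← ofReal_norm_eq_coe_nnnorm, norm_sub_rev]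
      rw [hedist, ENNReal.rpow_neg, ENNReal.ofReal_one, one_div]
  calc (∫⁻ y in Ω, ENNReal.ofReal ‖u x - u y‖ / edist x y ^ E ∂volume)
      ≤ ∫⁻ y, ENNReal.ofReal ‖u x - u y‖ / edist x y ^ E ∂volume :=
        setLIntegral_le_lintegral _ _
    _ ≤ ∫⁻ y, tailFun k E t (y - x) ∂volume := lintegral_mono hpt
    _ = ∫⁻ y, tailFun k E t (y + (-x)) ∂volume := by simp_rw [sub_eq_add_neg]
    _ = ∫⁻ z, tailFun k E t z ∂volume := lintegral_add_right_eq_self _ _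
    _ = Phi k E t := rfl

/-- the double integral for a single closed ball is finite -/
lemma perBall {k : ℕ} {s : ℝ} (hs : s ∈ Ioo (0:ℝ) 1) (c : Euc k) {r : ℝ} (hr : 0 < r)
    {Ω : Set (Euc k)} (hΩb : Bornology.IsBounded Ω) :
    (∫⁻ x in Ω, ∫⁻ y in Ω, ENNReal.ofReal ‖(closedBall c r).indicator (fun _ => (1:ℝ)) x
      - (closedBall c r).indicator (fun _ => (1:ℝ)) y‖
        / edist x y ^ (s + (k:ℝ)) ∂volume ∂volume) < ∞ := by
  obtain ⟨R, hR⟩ := hΩb.subset_closedBall c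
  set E : ℝ := s + (k:ℝ) with hE
  have hEk : (k:ℝ) < E := by simp [hE, hs.1]
  have h1 : (∫⁻ x in Ω, ∫⁻ y in Ω, ENNReal.ofReal ‖(closedBall c r).indicator (fun _ => (1:ℝ)) x
      - (closedBall c r).indicator (fun _ => (1:ℝ)) y‖ / edist x y ^ E ∂volume ∂volume)
      ≤ ∫⁻ x in Ω, Phi k E (|‖x - c‖ - r|) ∂volume :=
    lintegral_mono fun x => inner_bound E c r Ω x
  have h2 : ∫⁻ x in Ω, Phi k E (|‖x - c‖ - r|) ∂volume
      ≤ ∫⁻ x in closedBall c R, Phi k E (|‖x - c‖ - r|) ∂volume :=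
    lintegral_mono_set hR
  have h3 : ∫⁻ x in closedBall c R, Phi k E (|‖x - c‖ - r|) ∂volume
      ≤ ∫⁻ x in closedBall c R,
          ENNReal.ofReal (|‖x - c‖ - r| ^ (-s)) * Phi k E 1 ∂volume := by
    apply lintegral_mono_ae
    have hae : ∀ᵐ x ∂(volume : Measure (Euc k)), ‖x - c‖ ≠ r := by
      rw [ae_iff]
      have hset : {x : Euc k | ¬ ‖x - c‖ ≠ r} = sphere c r := by
        ext x
        simp [mem_sphere_iff_norm]
      rw [hset]
      exact Measure.addHaar_sphere_of_ne_zero volume c hr.ne'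
    filter_upwards [ae_restrict_of_ae hae] with x hx
    have ht0 : 0 < |‖x - c‖ - r| := abs_pos.2 (sub_ne_zero.2 hx)
    rw [Phi_smul ht0, show (k:ℝ) - E = -s by rw [hE]; ring,
      ENNReal.ofReal_rpow_of_pos ht0]
  have h4 : ∫⁻ x in closedBall c R,
      ENNReal.ofReal (|‖x - c‖ - r| ^ (-s)) * Phi k E 1 ∂volume
      = (∫⁻ x in closedBall c R, ENNReal.ofReal (|‖x - c‖ - r| ^ (-s)) ∂volume) * Phi k E 1 :=
    lintegral_mul_const' _ _ (Phi_one_lt_top hEk).ne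
  refine (h1.trans (h2.trans (h3.trans_eq h4))).trans_lt ?_
  exact ENNReal.mul_lt_top (outer_fin hs.1 hs.2 hr c) (Phi_one_lt_top hEk)

lemma indicator_diff_le {α ι : Type*} (F : Finset ι) (B : ι → Set α) (x y : α) :
    ‖(⋃ i ∈ F, B i).indicator (fun _ => (1:ℝ)) x - (⋃ i ∈ F, B i).indicator (fun _ => (1:ℝ)) y‖
    ≤ ∑ i ∈ F, ‖(B i).indicator (fun _ => (1:ℝ)) x - (B i).indicator (fun _ => (1:ℝ)) y‖ := by
  set U : Set α := ⋃ i ∈ F, B i with hU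
  have hnn : ∀ i ∈ F, (0:ℝ) ≤ ‖(B i).indicator (fun _ => (1:ℝ)) x
      - (B i).indicator (fun _ => (1:ℝ)) y‖ := fun i _ => norm_nonneg _
  by_cases hx : x ∈ U <;> by_cases hy : y ∈ U
  · rw [indicator_of_mem hx, indicator_of_mem hy, sub_self, norm_zero]
    exact Finset.sum_nonneg hnn
  · obtain ⟨i, hiF, hxi⟩ : ∃ i ∈ F, x ∈ B i := by simpa [hU, mem_iUnion] using hx
    have hyi : y ∉ B i := fun hyB => hy (mem_iUnion₂.2 ⟨i, hiF, hyB⟩)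
    rw [indicator_of_mem hx, indicator_of_notMem hy, sub_zero, norm_one]
    have : (1:ℝ) ≤ ‖(B i).indicator (fun _ => (1:ℝ)) x - (B i).indicator (fun _ => (1:ℝ)) y‖ := by
      rw [indicator_of_mem hxi, indicator_of_notMem hyi, sub_zero, norm_one]
    exact this.trans (Finset.single_le_sum hnn hiF)
  · obtain ⟨i, hiF, hyi⟩ : ∃ i ∈ F, y ∈ B i := by simpa [hU, mem_iUnion] using hy
    have hxi : x ∉ B i := fun hxB => hx (mem_iUnion₂.2 ⟨i, hiF, hxB⟩)
    rw [indicator_of_notMem hx, indicator_of_mem hy, zero_sub, norm_neg, norm_one]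
    have : (1:ℝ) ≤ ‖(B i).indicator (fun _ => (1:ℝ)) x - (B i).indicator (fun _ => (1:ℝ)) y‖ := by
      rw [indicator_of_notMem hxi, indicator_of_mem hyi, zero_sub, norm_neg, norm_one]
    exact this.trans (Finset.single_le_sum hnn hiF)
  · rw [indicator_of_notMem hx, indicator_of_notMem hy, sub_self, norm_zero]
    exact Finset.sum_nonneg hnn

/-- Cantor-type sets of positive measure with finite fractional
perimeter. Let `Ω ⊆ ℝᵏ` be a bounded open (nonempty) set, `s ∈ (0,1)`, `ε > 0`.
Then there is a compact `𝔠 ⊆ Ω` with `ℒᵏ(Ω \ 𝔠) ≤ ε ℒᵏ(Ω)` (in particular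
`ℒᵏ(𝔠) > 0`) and `𝟙_𝔠 ∈ W^{s,1}(Ω)`. -/
theorem statement12 {k : ℕ} (Ω : Set (Euc k)) (hΩo : IsOpen Ω)
    (hΩb : Bornology.IsBounded Ω) (hΩne : Ω.Nonempty)
    (s : ℝ) (hs : s ∈ Ioo (0 : ℝ) 1) (ε : ℝ) (hε : 0 < ε) :
    ∃ C : Set (Euc k), IsCompact C ∧ C ⊆ Ω ∧
      volume (Ω \ C) ≤ ENNReal.ofReal ε * volume Ω ∧
      0 < volume C ∧
      MemWs1 s Ω (C.indicator fun _ => (1 : ℝ)) := by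
  have hΩm : MeasurableSet Ω := hΩo.measurableSet
  have hvolpos : 0 < volume Ω := hΩo.measure_pos volume hΩne
  have hvolfin : volume Ω < ∞ := hΩb.measure_lt_top
  set ε' : ℝ := min ε (1/2) with hε'def
  have hε' : 0 < ε' := lt_min hε (by norm_num)
  have hη : ENNReal.ofReal ε' * volume Ω ≠ 0 := by
    apply mul_ne_zero
    · simpa [ENNReal.ofReal_eq_zero, not_le] using hε'
    · exact hvolpos.ne'
  obtain ⟨K, hKΩ, hKc, hKlt⟩ := hΩm.exists_isCompact_diff_lt hvolfin.ne hη
  have hKdiff : volume (Ω \ K) ≤ ENNReal.ofReal ε' * volume Ω := hKlt.le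
  have hKpos : 0 < volume K := by
    by_contra hcon
    push_neg at hcon
    have hK0 : volume K = 0 := le_antisymm hcon zero_le
    have h1 : volume Ω ≤ volume (Ω \ K) + volume K := by
      calc volume Ω ≤ volume ((Ω \ K) ∪ K) := measure_mono (fun x hx => by
            by_cases hxK : x ∈ K
            · exact Or.inr hxK
            · exact Or.inl ⟨hx, hxK⟩)
        _ ≤ volume (Ω \ K) + volume K := measure_union_le _ _
    rw [hK0, add_zero] at h1
    have h2 : ENNReal.ofReal ε' * volume Ω < 1 * volume Ω := by
      rw [ENNReal.mul_lt_mul_iff_left hvolpos.ne' hvolfin.ne]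
      apply ENNReal.ofReal_lt_one.2
      calc ε' ≤ 1/2 := min_le_right _ _
        _ < 1 := by norm_num
    rw [one_mul] at h2
    exact absurd (h1.trans hKdiff) (not_le.2 h2)
  have hKne : K.Nonempty := nonempty_of_measure_ne_zero hKpos.ne'
  have hcov : ∀ x ∈ K, ∃ ρ : ℝ, 0 < ρ ∧ closedBall x ρ ⊆ Ω := by
    intro x hx
    obtain ⟨δ, hδ, hδsub⟩ := Metric.isOpen_iff.1 hΩo x (hKΩ hx)
    exact ⟨δ/2, by positivity, fun y hy =>
      hδsub (lt_of_le_of_lt (mem_closedBall.1 hy) (by linarith))⟩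
  choose! ρ hρpos hρsub using hcov
  obtain ⟨b, hbK, hbfin, hbcov⟩ := hKc.elim_finite_subcover_image
    (fun x (_ : x ∈ K) => isOpen_ball (x := x) (ε := ρ x))
    (fun x hx => mem_iUnion₂.2 ⟨x, hx, mem_ball_self (hρpos x hx)⟩)
  set F : Finset (Euc k) := hbfin.toFinset with hF
  set C : Set (Euc k) := ⋃ i ∈ F, closedBall i (ρ i) with hC
  have hmemF : ∀ i, i ∈ F ↔ i ∈ b := fun i => hbfin.mem_toFinset
  have hCc : IsCompact C := F.isCompact_biUnion (fun i _ => isCompact_closedBall i (ρ i))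
  have hCΩ : C ⊆ Ω := iUnion₂_subset fun i hi => hρsub i (hbK ((hmemF i).1 hi))
  have hKC : K ⊆ C := by
    intro x hx
    obtain ⟨i, hib, hxi⟩ := mem_iUnion₂.1 (hbcov hx)
    exact mem_iUnion₂.2 ⟨i, (hmemF i).2 hib, ball_subset_closedBall hxi⟩
  have hCdiff : volume (Ω \ C) ≤ ENNReal.ofReal ε * volume Ω := by
    calc volume (Ω \ C) ≤ volume (Ω \ K) := measure_mono (diff_subset_diff_right hKC)
      _ ≤ ENNReal.ofReal ε' * volume Ω := hKdiff
      _ ≤ ENNReal.ofReal ε * volume Ω := by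
          gcongr
          exact min_le_left _ _
  have hCpos : 0 < volume C := hKpos.trans_le (measure_mono hKC)
  refine ⟨C, hCc, hCΩ, hCdiff, hCpos, ?_, ?_⟩
  · haveI : IsFiniteMeasure (volume.restrict Ω) :=
      ⟨by rwa [Measure.restrict_apply_univ]⟩
    rw [memLp_one_iff_integrable]
    exact (integrable_const (1:ℝ)).indicator hCc.measurableSet
  · set E : ℝ := s + (k:ℝ) with hE
    set u : Euc k → ℝ := C.indicator (fun _ => (1:ℝ)) with hu
    set v : Euc k → Euc k → ℝ := fun i => (closedBall i (ρ i)).indicator (fun _ => (1:ℝ)) with hv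
    have hvm : ∀ i, Measurable (v i) := fun i =>
      measurable_const.indicator measurableSet_closedBall
    have hgm : ∀ i : Euc k, Measurable (fun p : Euc k × Euc k =>
        ENNReal.ofReal ‖v i p.1 - v i p.2‖ / edist p.1 p.2 ^ E) := by
      intro i
      apply Measurable.div
      · exact (((hvm i).comp measurable_fst).sub ((hvm i).comp measurable_snd)).norm.ennreal_ofReal
      · exact (measurable_fst.edist measurable_snd).pow_const _
    have hfrac : fracPow (k : ℝ) s 1 (volume.restrict Ω) u
        = ∫⁻ x in Ω, ∫⁻ y in Ω, ENNReal.ofReal ‖u x - u y‖ / edist x y ^ E ∂volume ∂volume := by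
      unfold fracPow
      simp only [Real.rpow_one, mul_one, hE]
    rw [hfrac]
    have hsum : ∀ x y : Euc k, ENNReal.ofReal ‖u x - u y‖ / edist x y ^ E
        ≤ ∑ i ∈ F, ENNReal.ofReal ‖v i x - v i y‖ / edist x y ^ E := by
      intro x y
      have h1 : ENNReal.ofReal ‖u x - u y‖
          ≤ ∑ i ∈ F, ENNReal.ofReal ‖v i x - v i y‖ := by
        calc ENNReal.ofReal ‖u x - u y‖
            ≤ ENNReal.ofReal (∑ i ∈ F, ‖v i x - v i y‖) :=
              ENNReal.ofReal_le_ofReal (indicator_diff_le F _ x y)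
          _ = ∑ i ∈ F, ENNReal.ofReal ‖v i x - v i y‖ :=
              ENNReal.ofReal_sum_of_nonneg (fun i _ => norm_nonneg _)
      calc ENNReal.ofReal ‖u x - u y‖ / edist x y ^ E
          ≤ (∑ i ∈ F, ENNReal.ofReal ‖v i x - v i y‖) / edist x y ^ E := by gcongr
        _ = ∑ i ∈ F, ENNReal.ofReal ‖v i x - v i y‖ / edist x y ^ E := by
            simp only [div_eq_mul_inv, Finset.sum_mul]
    calc (∫⁻ x in Ω, ∫⁻ y in Ω, ENNReal.ofReal ‖u x - u y‖ / edist x y ^ E ∂volume ∂volume)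
        ≤ ∫⁻ x in Ω, ∫⁻ y in Ω, ∑ i ∈ F,
            ENNReal.ofReal ‖v i x - v i y‖ / edist x y ^ E ∂volume ∂volume :=
          lintegral_mono fun x => lintegral_mono fun y => hsum x y
      _ = ∫⁻ x in Ω, ∑ i ∈ F, ∫⁻ y in Ω,
            ENNReal.ofReal ‖v i x - v i y‖ / edist x y ^ E ∂volume ∂volume := by
          apply lintegral_congr fun x => ?_
          exact lintegral_finset_sum' F (fun i _ => ((hgm i).comp
            measurable_prodMk_left).aemeasurable)
      _ = ∑ i ∈ F, ∫⁻ x in Ω, ∫⁻ y in Ω,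
            ENNReal.ofReal ‖v i x - v i y‖ / edist x y ^ E ∂volume ∂volume := by
          apply lintegral_finset_sum'
          intro i _
          exact ((hgm i).lintegral_prod_right' (ν := volume.restrict Ω)).aemeasurable
      _ < ∞ := by
          rw [ENNReal.sum_lt_top]
          intro i hi
          exact perBall hs i (hρpos i (hbK ((hmemF i).1 hi))) hΩb
end
end

section
/- Let W := span(e₁,…,e_k) ⊆ ℝⁿ, let U ⊆ W be open, let f : U → W^⊥ be of class C^{1,1} (i.e. C¹ with Lipschitz gradient), and let S be the graph of f. Let V be a distribution of k-planes of class C¹ on a ball U(0,r) ⊆ ℝⁿ such that for every x ∈ U(0,r) the plane V(x) is the graph of a linear map M(x) : W → W^⊥ with M of class C¹. If V is non-involutive at every point of U(0,r), then ℋ^k(τ(S,V) ∩ U(0,r)) = 0. -/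
noncomputable section
open MeasureTheory Set Module Filter Metric
open scoped ENNReal NNReal Topology

variable {n : ℕ}

/-- Lie bracket of two `C¹` vector fields: `[X,Y](x) = DX_x(Y x) − DY_x(X x)`. -/
def lieBracket (X Y : Euc n → Euc n) (x : Euc n) : Euc n :=
  fderiv ℝ X x (Y x) - fderiv ℝ Y x (X x)

/-- `V` is involutive at `x` (relative to the open set `Ω`): for every pair of `C¹`
vector fields tangent to `V` on `Ω`, the Lie bracket at `x` lies in `V x`. -/
def InvolutiveAt (Ω : Set (Euc n)) (V : Euc n → Submodule ℝ (Euc n)) (x : Euc n) : Prop :=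
  ∀ X Y : Euc n → Euc n, ContDiffOn ℝ 1 X Ω → ContDiffOn ℝ 1 Y Ω →
    (∀ y ∈ Ω, X y ∈ V y) → (∀ y ∈ Ω, Y y ∈ V y) → lieBracket X Y x ∈ V x

/-- Tangency set of a surface `S` to the plane field `V`: points of `S` where the tangent
space of `S` (the tangent cone, which for a `C¹` submanifold is the classical tangent
plane) coincides with `V(x)`. -/
def tangencySet (S : Set (Euc n)) (V : Euc n → Submodule ℝ (Euc n)) : Set (Euc n) :=
  {x ∈ S | tangentConeAt ℝ S x = (V x : Set (Euc n))}

/-- The identification `ℝᵏ × ℝᵐ ≃ ℝ^{k+m}`, `(z,w) ↦ (z,w)`. -/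
def app {k m : ℕ} (z : Euc k) (w : Euc m) : Euc (k + m) :=
  WithLp.toLp 2 (fun i => Fin.append (fun j => z j) (fun j => w j) i)

namespace Statement18Aux

variable {k m : ℕ}

lemma app_castAdd (z : Euc k) (w : Euc m) (j : Fin k) :
    app z w (Fin.castAdd m j) = z j := Fin.append_left _ _ j

lemma app_natAdd (z : Euc k) (w : Euc m) (p : Fin m) :
    app z w (Fin.natAdd k p) = w p := Fin.append_right _ _ p


/-- Generator of the plane: `e_j + ∑_p A p j • e_{k+p}`. -/
def gen (A : Fin m → Fin k → ℝ) (j : Fin k) : Euc (k+m) :=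
  EuclideanSpace.single (Fin.castAdd m j) (1:ℝ) +
    ∑ p : Fin m, A p j • EuclideanSpace.single (Fin.natAdd k p) (1:ℝ)

lemma sum_smul_single_apply {N : ℕ} {ι : Type*} [Fintype ι] (c : ι → ℝ) (g : ι → Fin N)
    (i : Fin N) : (∑ p, c p • EuclideanSpace.single (g p) (1:ℝ)) i
      = ∑ p, c p * (if i = g p then 1 else 0) := by
  rw [show (∑ p, c p • EuclideanSpace.single (g p) (1:ℝ)) i
      = EuclideanSpace.proj (𝕜 := ℝ) i (∑ p, c p • EuclideanSpace.single (g p) (1:ℝ)) from rfl,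
    map_sum]
  simp [EuclideanSpace.single_apply, mul_comm]

lemma gen_apply_castAdd (A : Fin m → Fin k → ℝ) (j j' : Fin k) :
    gen A j (Fin.castAdd m j') = if j' = j then 1 else 0 := by
  rw [gen, PiLp.add_apply, sum_smul_single_apply, EuclideanSpace.single_apply]
  have : ∀ p : Fin m, (Fin.castAdd m j' : Fin (k+m)) ≠ Fin.natAdd k p := by
    intro p; simp [Fin.ext_iff]; omega
  simp [this, Fin.castAdd_inj]

lemma gen_apply_natAdd (A : Fin m → Fin k → ℝ) (j : Fin k) (p : Fin m) :
    gen A j (Fin.natAdd k p) = A p j := by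
  rw [gen, PiLp.add_apply, sum_smul_single_apply, EuclideanSpace.single_apply]
  have h2 : ∀ p : Fin m, (Fin.natAdd k p : Fin (k+m)) ≠ Fin.castAdd m j := by
    intro p; simp [Fin.ext_iff]; omega
  have h3 : ∀ p' : Fin m, (Fin.natAdd k p = Fin.natAdd k p') ↔ p = p' := by
    intro p'; simp [Fin.ext_iff]
  simp [h2, h3]

/-- Decomposition of a vector satisfying the graph condition over the generators. -/
lemma decomp (A : Fin m → Fin k → ℝ) (v : Euc (k+m))
    (hv : ∀ p, v (Fin.natAdd k p) = ∑ j, A p j * v (Fin.castAdd m j)) :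
    v = ∑ j, v (Fin.castAdd m j) • gen A j := by
  apply PiLp.ext; intro i
  have happ : ∀ i, (∑ j, v (Fin.castAdd m j) • gen A j) i
      = ∑ j, v (Fin.castAdd m j) * gen A j i := by
    intro i
    rw [show (∑ j, v (Fin.castAdd m j) • gen A j) i
      = EuclideanSpace.proj (𝕜 := ℝ) i (∑ j, v (Fin.castAdd m j) • gen A j) from rfl, map_sum]
    simp
  induction i using Fin.addCases with
  | left j' =>
    rw [happ]
    simp [gen_apply_castAdd]
  | right p =>
    rw [happ, hv p]
    simp [gen_apply_natAdd, mul_comm]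

/-- Membership in the span of the generators is the graph condition. -/
lemma mem_span_iff (A : Fin m → Fin k → ℝ) (v : Euc (k+m)) :
    v ∈ Submodule.span ℝ (Set.range fun j : Fin k =>
        EuclideanSpace.single (Fin.castAdd m j) (1 : ℝ) +
          ∑ p : Fin m, A p j • EuclideanSpace.single (Fin.natAdd k p) (1 : ℝ)) ↔
      ∀ p, v (Fin.natAdd k p) = ∑ j, A p j * v (Fin.castAdd m j) := by
  have hgen : (fun j : Fin k => EuclideanSpace.single (Fin.castAdd m j) (1 : ℝ) +
          ∑ p : Fin m, A p j • EuclideanSpace.single (Fin.natAdd k p) (1 : ℝ)) = gen A := rfl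
  rw [hgen]
  constructor
  · intro hv
    induction hv using Submodule.span_induction with
    | mem x hx =>
      rcases hx with ⟨j, rfl⟩
      intro p
      rw [gen_apply_natAdd]
      rw [Finset.sum_eq_single j]
      · rw [gen_apply_castAdd]; simp
      · intro j' _ hj'; rw [gen_apply_castAdd]; simp [hj']
      · simp
    | zero => intro p; simp
    | add x y _ _ hx hy =>
      intro p
      rw [PiLp.add_apply, hx p, hy p, ← Finset.sum_add_distrib]
      congr 1; funext j; rw [PiLp.add_apply]; ring
    | smul c x _ hx =>
      intro p
      rw [PiLp.smul_apply, smul_eq_mul, hx p, Finset.mul_sum]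
      refine Finset.sum_congr rfl fun j _ => ?_
      rw [PiLp.smul_apply, smul_eq_mul]; ring
  · intro hv
    rw [decomp A v hv]
    exact Submodule.sum_mem _ fun j _ =>
      Submodule.smul_mem _ _ (Submodule.subset_span (Set.mem_range_self j))

section TangentDeriv

variable {r : ℝ} {M : Euc (k + m) → Fin m → Fin k → ℝ}
  {V : Euc (k + m) → Submodule ℝ (Euc (k + m))}

/-- Differentiability of a matrix entry of `M`. -/
lemma hMpj (hM : ContDiffOn ℝ 1 M (ball 0 r)) {x₀ : Euc (k+m)} (hx₀ : x₀ ∈ ball (0:Euc (k+m)) r)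
    (p : Fin m) (j : Fin k) : DifferentiableAt ℝ (fun x => M x p j) x₀ := by
  have h1 : DifferentiableAt ℝ M x₀ :=
    (hM.differentiableOn one_ne_zero).differentiableAt (isOpen_ball.mem_nhds hx₀)
  exact differentiableAt_pi.1 (differentiableAt_pi.1 h1 p) j

/-- Derivative identity for a `C¹` vector field tangent to `V`. -/
lemma tangent_deriv
    (hM : ContDiffOn ℝ 1 M (ball 0 r))
    (hV : ∀ x ∈ ball (0 : Euc (k + m)) r,
      V x = Submodule.span ℝ (Set.range fun j : Fin k =>
        EuclideanSpace.single (Fin.castAdd m j) (1 : ℝ) +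
          ∑ p : Fin m, M x p j • EuclideanSpace.single (Fin.natAdd k p) (1 : ℝ)))
    {X : Euc (k+m) → Euc (k+m)} (hX : ContDiffOn ℝ 1 X (ball 0 r))
    (hXt : ∀ y ∈ ball (0 : Euc (k+m)) r, X y ∈ V y)
    {x₀ : Euc (k+m)} (hx₀ : x₀ ∈ ball (0:Euc (k+m)) r) (p : Fin m) (v : Euc (k+m)) :
    fderiv ℝ X x₀ v (Fin.natAdd k p) =
      ∑ j, (X x₀ (Fin.castAdd m j) * fderiv ℝ (fun y => M y p j) x₀ v
        + M x₀ p j * fderiv ℝ X x₀ v (Fin.castAdd m j)) := by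
  have hXd : DifferentiableAt ℝ X x₀ :=
    (hX.differentiableOn one_ne_zero).differentiableAt (isOpen_ball.mem_nhds hx₀)
  set DX := fderiv ℝ X x₀ with hDX
  have hcoord : ∀ i : Fin (k+m), HasFDerivAt (fun y => X y i)
      ((EuclideanSpace.proj (𝕜 := ℝ) i).comp DX) x₀ :=
    fun i => (EuclideanSpace.proj (𝕜 := ℝ) i).hasFDerivAt.comp x₀ hXd.hasFDerivAt
  have hMd : ∀ (p : Fin m) (j : Fin k),
      HasFDerivAt (fun y => M y p j) (fderiv ℝ (fun y => M y p j) x₀) x₀ :=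
    fun p j => (hMpj hM hx₀ p j).hasFDerivAt
  -- the function φ vanishes on the ball
  set φ : Euc (k+m) → ℝ := fun y =>
    X y (Fin.natAdd k p) - ∑ j, M y p j * X y (Fin.castAdd m j) with hφ
  have hφ0 : ∀ y ∈ ball (0 : Euc (k+m)) r, φ y = 0 := by
    intro y hy
    have := ((mem_span_iff (M y) (X y)).1 (by rw [← hV y hy]; exact hXt y hy)) p
    simp only [hφ, this, sub_self]
  -- φ has two derivatives
  set Φ : Euc (k+m) →L[ℝ] ℝ :=
    (EuclideanSpace.proj (𝕜 := ℝ) (Fin.natAdd k p)).comp DX -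
      ∑ j, (M x₀ p j • (EuclideanSpace.proj (𝕜 := ℝ) (Fin.castAdd m j)).comp DX
        + X x₀ (Fin.castAdd m j) • fderiv ℝ (fun y => M y p j) x₀) with hΦ
  have hd1 : HasFDerivAt φ Φ x₀ := by
    rw [hφ, hΦ]
    refine ((hcoord (Fin.natAdd k p))).sub ?_
    refine HasFDerivAt.fun_sum fun j _ => ?_
    exact HasFDerivAt.mul (𝕜 := ℝ) (hMd p j) (hcoord (Fin.castAdd m j))
  have hd2 : HasFDerivAt φ (0 : Euc (k+m) →L[ℝ] ℝ) x₀ := by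
    have : φ =ᶠ[𝓝 x₀] (fun _ => (0:ℝ)) :=
      Filter.eventuallyEq_of_mem (isOpen_ball.mem_nhds hx₀) hφ0
    exact (hasFDerivAt_const (𝕜 := ℝ) (0:ℝ) x₀).congr_of_eventuallyEq this
  have hΦ0 : Φ = (0 : Euc (k+m) →L[ℝ] ℝ) := hd1.unique hd2
  have := congrFun (congrArg (fun (L : Euc (k+m) →L[ℝ] ℝ) => (L : Euc (k+m) → ℝ)) hΦ0) v
  simp only [hΦ, ContinuousLinearMap.coe_sub', Pi.sub_apply, ContinuousLinearMap.coe_comp',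
    Function.comp_apply, ContinuousLinearMap.coe_sum', Finset.sum_apply,
    ContinuousLinearMap.add_apply, ContinuousLinearMap.coe_smul', Pi.smul_apply,
    smul_eq_mul, ContinuousLinearMap.zero_apply,
    sub_eq_zero] at this
  have hproj : ∀ (i : Fin (k+m)) (w : Euc (k+m)),
      EuclideanSpace.proj (𝕜 := ℝ) i w = w i := fun _ _ => rfl
  simp only [hproj] at this
  rw [this]
  refine Finset.sum_congr rfl fun j _ => ?_
  ring
end TangentDeriv

section Invol
variable {r : ℝ} {M : Euc (k + m) → Fin m → Fin k → ℝ}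
  {V : Euc (k + m) → Submodule ℝ (Euc (k + m))}

lemma involutive_of_symm
    (hM : ContDiffOn ℝ 1 M (ball 0 r))
    (hV : ∀ x ∈ ball (0 : Euc (k + m)) r,
      V x = Submodule.span ℝ (Set.range fun j : Fin k =>
        EuclideanSpace.single (Fin.castAdd m j) (1 : ℝ) +
          ∑ p : Fin m, M x p j • EuclideanSpace.single (Fin.natAdd k p) (1 : ℝ)))
    {x₀ : Euc (k+m)} (hx₀ : x₀ ∈ ball (0:Euc (k+m)) r)
    (hsym : ∀ (p : Fin m) (i j : Fin k),
      fderiv ℝ (fun y => M y p j) x₀ (gen (M x₀) i) = fderiv ℝ (fun y => M y p i) x₀ (gen (M x₀) j)) :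
    InvolutiveAt (ball 0 r) V x₀ := by
  intro X Y hX hY hXt hYt
  rw [hV x₀ hx₀, mem_span_iff]
  intro p
  have hXs := fun v => tangent_deriv hM hV hX hXt hx₀ p v
  have hYs := fun v => tangent_deriv hM hV hY hYt hx₀ p v
  have hXV : ∀ p', X x₀ (Fin.natAdd k p') = ∑ j, M x₀ p' j * X x₀ (Fin.castAdd m j) :=
    (mem_span_iff (M x₀) (X x₀)).1 (by rw [← hV x₀ hx₀]; exact hXt x₀ hx₀)
  have hYV : ∀ p', Y x₀ (Fin.natAdd k p') = ∑ j, M x₀ p' j * Y x₀ (Fin.castAdd m j) :=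
    (mem_span_iff (M x₀) (Y x₀)).1 (by rw [← hV x₀ hx₀]; exact hYt x₀ hx₀)
  -- decompose X x₀ and Y x₀ over the generators
  have hXdec := decomp (M x₀) (X x₀) hXV
  have hYdec := decomp (M x₀) (Y x₀) hYV
  -- the key cross term identity
  have key : ∀ (W Z : Euc (k+m)),
      (∀ p', W (Fin.natAdd k p') = ∑ j, M x₀ p' j * W (Fin.castAdd m j)) →
      (∀ p', Z (Fin.natAdd k p') = ∑ j, M x₀ p' j * Z (Fin.castAdd m j)) →
      ∑ j, W (Fin.castAdd m j) * fderiv ℝ (fun y => M y p j) x₀ Z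
        = ∑ j, Z (Fin.castAdd m j) * fderiv ℝ (fun y => M y p j) x₀ W := by
    intro W Z hW hZ
    have hWdec := decomp (M x₀) W hW
    have hZdec := decomp (M x₀) Z hZ
    calc ∑ j, W (Fin.castAdd m j) * fderiv ℝ (fun y => M y p j) x₀ Z
        = ∑ j, ∑ i, W (Fin.castAdd m j) * Z (Fin.castAdd m i)
            * fderiv ℝ (fun y => M y p j) x₀ (gen (M x₀) i) := by
          refine Finset.sum_congr rfl fun j _ => ?_
          conv_lhs => rw [hZdec]
          rw [map_sum, Finset.mul_sum]
          refine Finset.sum_congr rfl fun i _ => ?_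
          rw [_root_.map_smul]
          simp [smul_eq_mul]; ring
      _ = ∑ j, ∑ i, W (Fin.castAdd m j) * Z (Fin.castAdd m i)
            * fderiv ℝ (fun y => M y p i) x₀ (gen (M x₀) j) := by
          refine Finset.sum_congr rfl fun j _ => Finset.sum_congr rfl fun i _ => ?_
          rw [hsym p i j]
      _ = ∑ j, Z (Fin.castAdd m j) * fderiv ℝ (fun y => M y p j) x₀ W := by
          rw [Finset.sum_comm]
          refine Finset.sum_congr rfl fun i _ => ?_
          conv_rhs => rw [hWdec, map_sum, Finset.mul_sum]
          refine Finset.sum_congr rfl fun j _ => ?_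
          rw [_root_.map_smul]
          simp [smul_eq_mul]; ring
  have hkey := key (X x₀) (Y x₀) hXV hYV
  -- now compute the bracket coordinates
  have hbr : ∀ i : Fin (k+m), lieBracket X Y x₀ i
      = fderiv ℝ X x₀ (Y x₀) i - fderiv ℝ Y x₀ (X x₀) i := fun i => rfl
  rw [hbr, hXs (Y x₀), hYs (X x₀)]
  have hsplit : ∀ j : Fin k, lieBracket X Y x₀ (Fin.castAdd m j)
      = fderiv ℝ X x₀ (Y x₀) (Fin.castAdd m j) - fderiv ℝ Y x₀ (X x₀) (Fin.castAdd m j) :=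
    fun j => rfl
  simp only [hsplit, Finset.mul_sum]
  rw [← Finset.sum_sub_distrib]
  have : ∀ j ∈ Finset.univ, (X x₀ (Fin.castAdd m j) * fderiv ℝ (fun y => M y p j) x₀ (Y x₀)
        + M x₀ p j * fderiv ℝ X x₀ (Y x₀) (Fin.castAdd m j))
      - (Y x₀ (Fin.castAdd m j) * fderiv ℝ (fun y => M y p j) x₀ (X x₀)
        + M x₀ p j * fderiv ℝ Y x₀ (X x₀) (Fin.castAdd m j))
      = (X x₀ (Fin.castAdd m j) * fderiv ℝ (fun y => M y p j) x₀ (Y x₀)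
          - Y x₀ (Fin.castAdd m j) * fderiv ℝ (fun y => M y p j) x₀ (X x₀))
        + (M x₀ p j * (fderiv ℝ X x₀ (Y x₀) (Fin.castAdd m j)
            - fderiv ℝ Y x₀ (X x₀) (Fin.castAdd m j))) := by
    intro j _; ring
  rw [Finset.sum_congr rfl this, Finset.sum_add_distrib, Finset.sum_sub_distrib, hkey,
    sub_self, zero_add]
end Invol

/-- At a Lebesgue density point of `T`, the tangent cone of `T` is everything. -/
lemma tangentCone_eq_univ_of_density {K : ℕ} (hK : 0 < K) {T : Set (Euc K)} {y : Euc K}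
    (hy : y ∈ T)
    (hd : Tendsto (fun ρ => volume (T ∩ closedBall y ρ) / volume (closedBall y ρ))
      (𝓝[>] (0:ℝ)) (𝓝 1)) (v : Euc K) :
    v ∈ tangentConeAt ℝ T y := by
  haveI : Nonempty (Fin K) := ⟨⟨0, hK⟩⟩
  haveI : Nontrivial (Euc K) := ⟨0, EuclideanSpace.single ⟨0,hK⟩ (1:ℝ), by
    intro h
    have := congrArg (fun w : Euc K => w (⟨0,hK⟩ : Fin K)) h.symm
    simp [EuclideanSpace.single_apply] at this⟩
  have hfr : finrank ℝ (Euc K) = K := finrank_euclideanSpace_fin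
  -- main claim: for each ε > 0, eventually in t, T meets ball (y + t • v) (ε t)
  have claim : ∀ ε : ℝ, 0 < ε → ∀ᶠ t in 𝓝[>] (0:ℝ),
      (T ∩ ball (y + t • v) (ε * t)).Nonempty := by
    intro ε hε
    by_contra hcon
    rw [Filter.not_eventually] at hcon
    have hρpos : (0:ℝ) < ‖v‖ + ε := by positivity
    set δ : ℝ≥0∞ := ENNReal.ofReal ((ε / (‖v‖ + ε)) ^ K) with hδ
    have hδ0 : δ ≠ 0 := by
      rw [hδ]
      simp only [ne_eq, ENNReal.ofReal_eq_zero, not_le]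
      positivity
    have hδ1 : (1:ℝ≥0∞) - δ < 1 := ENNReal.sub_lt_self ENNReal.one_ne_top one_ne_zero hδ0
    -- for bad t, the density ratio at radius (‖v‖+ε)t is at most 1 - δ
    have hbad : ∀ t : ℝ, 0 < t → (T ∩ ball (y + t • v) (ε * t)) = ∅ →
        volume (T ∩ closedBall y ((‖v‖ + ε) * t)) / volume (closedBall y ((‖v‖ + ε) * t))
          ≤ 1 - δ := by
      intro t ht hempty
      set R := (‖v‖ + ε) * t with hR
      have hRpos : 0 < R := by positivity
      have hsub : ball (y + t • v) (ε * t) ⊆ closedBall y R := by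
        intro z hz
        rw [mem_ball] at hz
        rw [mem_closedBall]
        have h1 : dist (y + t • v) y = t * ‖v‖ := by
          rw [dist_eq_norm, add_sub_cancel_left, norm_smul, Real.norm_eq_abs, abs_of_pos ht]
        calc dist z y ≤ dist z (y + t • v) + dist (y + t • v) y := dist_triangle _ _ _
          _ ≤ ε * t + t * ‖v‖ := by rw [h1]; exact add_le_add_left hz.le _
          _ = R := by rw [hR]; ring
      have hdisj : Disjoint (T ∩ closedBall y R) (ball (y + t • v) (ε * t)) := by
        rw [Set.disjoint_left]
        intro z hz1 hz2
        have : z ∈ T ∩ ball (y + t • v) (ε * t) := ⟨hz1.1, hz2⟩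
        rw [hempty] at this
        exact this
      have hunion : volume (T ∩ closedBall y R) + volume (ball (y + t • v) (ε * t))
          ≤ volume (closedBall y R) := by
        rw [← measure_union hdisj measurableSet_ball]
        exact measure_mono (Set.union_subset (Set.inter_subset_right) hsub)
      have hratio : volume (T ∩ closedBall y R) / volume (closedBall y R)
          + volume (ball (y + t • v) (ε * t)) / volume (closedBall y R) ≤ 1 := by
        rw [ENNReal.div_add_div_same]
        exact le_trans (ENNReal.div_le_div_right hunion _) ENNReal.div_self_le_one
      have hfrac : volume (ball (y + t • v) (ε * t)) / volume (closedBall y R) = δ := by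
        rw [Measure.addHaar_ball _ _ (by positivity : (0:ℝ) ≤ ε * t),
          Measure.addHaar_closedBall _ _ hRpos.le, hfr,
          ENNReal.mul_div_mul_right _ _ (measure_ball_pos volume (0:Euc K) one_pos).ne'
            measure_ball_lt_top.ne,
          ← ENNReal.ofReal_div_of_pos (by positivity), hδ]
        congr 1
        rw [← div_pow, hR]
        congr 1
        field_simp
      rw [hfrac] at hratio
      exact ENNReal.le_sub_of_add_le_right (by rw [hδ]; exact ENNReal.ofReal_ne_top) hratio
    -- get contradiction with convergence to 1
    have htend : Tendsto (fun t : ℝ => (‖v‖ + ε) * t) (𝓝[>] (0:ℝ)) (𝓝[>] (0:ℝ)) := by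
      rw [tendsto_nhdsWithin_iff]
      constructor
      · have h := (continuous_const.mul continuous_id : Continuous fun s : ℝ => (‖v‖ + ε) * s).tendsto (0:ℝ)
        simp only [Pi.mul_apply, mul_zero] at h
        exact h.mono_left nhdsWithin_le_nhds
      · filter_upwards [self_mem_nhdsWithin] with t ht
        exact mul_pos hρpos ht
    have hev := (hd.comp htend).eventually (eventually_gt_nhds hδ1)
    rcases (hcon.and_eventually hev).and_eventually self_mem_nhdsWithin |>.exists
      with ⟨t, ⟨hbad_t, hlt⟩, htpos⟩
    have := hbad t htpos (Set.not_nonempty_iff_eq_empty.1 hbad_t)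
    exact absurd (lt_of_lt_of_le hlt this) (lt_irrefl _)
  -- construct the sequence realizing v in the tangent cone
  have hseq : ∀ n : ℕ, ∃ t : ℝ, (0 < t ∧ t < 1/((n:ℝ)+1)) ∧
      (T ∩ ball (y + t • v) ((1/((n:ℝ)+1)) * t)).Nonempty := by
    intro n
    have h1 := claim (1/((n:ℝ)+1)) (by positivity)
    have h2 : Ioo (0:ℝ) (1/((n:ℝ)+1)) ∈ 𝓝[>] (0:ℝ) :=
      Ioo_mem_nhdsGT_of_mem ⟨le_refl 0, by positivity⟩
    rcases (h1.and (eventually_of_mem h2 fun t ht => ht)).exists with ⟨t, hne, hIoo⟩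
    exact ⟨t, ⟨hIoo.1, hIoo.2⟩, hne⟩
  choose t ht hne using hseq
  choose z hz using hne
  rw [mem_tangentConeAt_iff_exists_seq_norm_tendsto_atTop]
  refine ⟨fun n => (t n)⁻¹, fun n => z n - y, ?_, ?_, ?_⟩
  swap
  · refine Filter.Eventually.of_forall fun n => ?_
    have : y + (z n - y) = z n := by abel
    rw [this]
    exact (hz n).1
  · refine tendsto_atTop_mono (fun n => ?_) 
      (tendsto_atTop_add_const_right _ (1:ℝ) tendsto_natCast_atTop_atTop)
    have h1 : ((n:ℝ)+1) ≤ (t n)⁻¹ := by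
      have := (ht n).2
      calc ((n:ℝ)+1) = (1/((n:ℝ)+1))⁻¹ := by rw [one_div, inv_inv]
        _ ≤ (t n)⁻¹ := by
            apply inv_anti₀ (ht n).1 this.le
    calc ((n:ℝ)+1) ≤ (t n)⁻¹ := h1
      _ ≤ ‖(t n)⁻¹‖ := le_abs_self _
  · rw [tendsto_iff_norm_sub_tendsto_zero]
    refine squeeze_zero_norm (fun n => ?_) tendsto_one_div_add_atTop_nhds_zero_nat
    have htn := (ht n).1
    have hv1 : (t n)⁻¹ • (t n • v) = v := by
      rw [smul_smul, inv_mul_cancel₀ htn.ne', one_smul]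
    have h1 : (t n)⁻¹ • (z n - y) - v = (t n)⁻¹ • (z n - (y + t n • v)) := by
      calc (t n)⁻¹ • (z n - y) - v = (t n)⁻¹ • (z n - y) - (t n)⁻¹ • (t n • v) := by rw [hv1]
        _ = (t n)⁻¹ • (z n - (y + t n • v)) := by rw [← smul_sub]; congr 1; abel
    rw [norm_norm, h1, norm_smul, Real.norm_eq_abs, abs_of_pos (inv_pos.2 htn)]
    have h2 : ‖z n - (y + t n • v)‖ ≤ (1/((n:ℝ)+1)) * t n := by
      have := (hz n).2
      rw [mem_ball, dist_eq_norm] at this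
      exact this.le
    calc (t n)⁻¹ * ‖z n - (y + t n • v)‖ ≤ (t n)⁻¹ * ((1/((n:ℝ)+1)) * t n) := by
          exact mul_le_mul_of_nonneg_left h2 (inv_pos.2 htn).le
      _ = 1/((n:ℝ)+1) := by field_simp

/-- A Lebesgue-null set in `Euc K` is `ℋᴷ`-null. -/
lemma hausdorff_null_of_volume_null {K : ℕ} {T : Set (Euc K)} (hT : volume T = 0) :
    μH[(K:ℝ)] T = 0 := by
  classical
  set e : Euc K ≃ᵐ (Fin K → ℝ) := (MeasurableEquiv.toLp 2 (Fin K → ℝ)).symm with he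
  have h1 : volume (⇑e.symm ⁻¹' T) = 0 := by
    have hmp : MeasurePreserving e.symm :=
      (EuclideanSpace.volume_preserving_symm_measurableEquiv_toLp (Fin K)).symm
    refine le_antisymm ?_ (zero_le)
    calc volume (⇑e.symm ⁻¹' T) ≤ Measure.map (⇑e.symm) volume T :=
          Measure.le_map_apply hmp.measurable.aemeasurable T
      _ = volume T := by rw [hmp.map_eq]
      _ = 0 := hT
  have h2 : μH[(K:ℝ)] (⇑e.symm ⁻¹' T) = 0 := by
    have := hausdorffMeasure_pi_real (ι := Fin K)
    rw [show ((K:ℝ)) = ((Fintype.card (Fin K) : ℕ) : ℝ) by simp, this]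
    exact h1
  -- transfer back via the Lipschitz linear equivalence
  have hTim : T = ⇑(EuclideanSpace.equiv (Fin K) ℝ).symm '' (⇑e.symm ⁻¹' T) := by
    ext x
    simp only [Set.mem_image, Set.mem_preimage]
    constructor
    · intro hx
      exact ⟨e x, by simpa using hx, rfl⟩
    · rintro ⟨w, hw, rfl⟩
      exact hw
  rw [hTim]
  refine le_antisymm ?_ (zero_le)
  have hlip : LipschitzWith _ ⇑(EuclideanSpace.equiv (Fin K) ℝ).symm.toContinuousLinearMap :=
    (EuclideanSpace.equiv (Fin K) ℝ).symm.toContinuousLinearMap.lipschitz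
  calc μH[(K:ℝ)] (⇑(EuclideanSpace.equiv (Fin K) ℝ).symm '' (⇑e.symm ⁻¹' T))
      ≤ (‖(EuclideanSpace.equiv (Fin K) ℝ).symm.toContinuousLinearMap‖₊ : ℝ≥0∞) ^ (K:ℝ)
          * μH[(K:ℝ)] (⇑e.symm ⁻¹' T) :=
        hlip.hausdorffMeasure_image_le (by positivity) _
    _ = 0 := by rw [h2, mul_zero]

/-- The image of an `ℋᴷ`-null subset of an open set under a `C¹` map is `ℋᴷ`-null. -/
lemma hausdorff_image_null {K N : ℕ} {g : Euc K → Euc N} {U T : Set (Euc K)}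
    (hU : IsOpen U) (hg : ContDiffOn ℝ 1 g U) (hTU : T ⊆ U) (h0 : μH[(K:ℝ)] T = 0) :
    μH[(K:ℝ)] (g '' T) = 0 := by
  classical
  -- local Lipschitz neighborhoods
  have hloc : ∀ y : T, ∃ s : Set (Euc K), IsOpen s ∧ (y:Euc K) ∈ s ∧
      ∃ L : ℝ≥0, LipschitzOnWith L g s := by
    rintro ⟨y, hy⟩
    have hCA : ContDiffAt ℝ 1 g y := hg.contDiffAt (hU.mem_nhds (hTU hy))
    rcases hCA.exists_lipschitzOnWith with ⟨L, t, htnhds, hlip⟩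
    rcases _root_.mem_nhds_iff.1 htnhds with ⟨s, hst, hsopen, hys⟩
    exact ⟨s, hsopen, hys, L, hlip.mono hst⟩
  choose s hsopen hsmem L hLip using hloc
  -- countable subcover
  obtain ⟨I, hIcnt, hIeq⟩ := TopologicalSpace.isOpen_iUnion_countable s hsopen
  have hTcov : T ⊆ ⋃ i ∈ I, s i := by
    intro x hx
    rw [hIeq]
    exact Set.mem_iUnion.2 ⟨⟨x, hx⟩, hsmem _⟩
  have himg : g '' T ⊆ ⋃ i ∈ I, g '' (T ∩ s i) := by
    rintro _ ⟨x, hx, rfl⟩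
    rcases Set.mem_iUnion₂.1 (hTcov hx) with ⟨i, hi, hxi⟩
    exact Set.mem_iUnion₂.2 ⟨i, hi, ⟨x, ⟨hx, hxi⟩, rfl⟩⟩
  refine le_antisymm ?_ (zero_le)
  calc μH[(K:ℝ)] (g '' T) ≤ ∑' i : I, μH[(K:ℝ)] (g '' (T ∩ s i)) :=
        le_trans (measure_mono himg) (measure_biUnion_le _ hIcnt _)
    _ = 0 := by
        refine ENNReal.tsum_eq_zero.2 fun i => ?_
        refine le_antisymm ?_ (zero_le)
        calc μH[(K:ℝ)] (g '' (T ∩ s i))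
            ≤ (L i : ℝ≥0∞) ^ (K:ℝ) * μH[(K:ℝ)] (T ∩ s i) :=
              ((hLip i).mono Set.inter_subset_right).hausdorffMeasure_image_le (by positivity)
          _ ≤ (L i : ℝ≥0∞) ^ (K:ℝ) * μH[(K:ℝ)] T := by
              exact mul_le_mul_right (measure_mono Set.inter_subset_left) _
          _ = 0 := by rw [h0, mul_zero]

/-- `app` as a continuous linear map. -/
def appL (k m : ℕ) : (Euc k × Euc m) →L[ℝ] Euc (k + m) :=
  LinearMap.toContinuousLinearMap
  { toFun := fun zw => app zw.1 zw.2
    map_add' := by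
      intro a b
      apply PiLp.ext
      intro i
      rw [PiLp.add_apply]
      show app (a + b).1 (a + b).2 i = app a.1 a.2 i + app b.1 b.2 i
      induction i using Fin.addCases with
      | left j => rw [app_castAdd, app_castAdd, app_castAdd]; rfl
      | right p => rw [app_natAdd, app_natAdd, app_natAdd]; rfl
    map_smul' := by
      intro c a
      apply PiLp.ext
      intro i
      rw [RingHom.id_apply, PiLp.smul_apply]
      show app (c • a).1 (c • a).2 i = c • app a.1 a.2 i
      induction i using Fin.addCases with
      | left j => rw [app_castAdd, app_castAdd]; rfl
      | right p => rw [app_natAdd, app_natAdd]; rfl }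

lemma appL_apply (z : Euc k) (w : Euc m) : appL k m (z, w) = app z w := rfl

/-- The matrix `A` as a continuous linear map `Euc k →L Euc m`. -/
def matCLM (A : Fin m → Fin k → ℝ) : Euc k →L[ℝ] Euc m :=
  ∑ p, ∑ j, A p j • ((EuclideanSpace.proj (𝕜 := ℝ) j).smulRight (EuclideanSpace.single p (1:ℝ)))

lemma matCLM_apply (A : Fin m → Fin k → ℝ) (u : Euc k) (p₀ : Fin m) :
    matCLM A u p₀ = ∑ j, A p₀ j * u j := by
  have h1 : matCLM A u = ∑ p, ∑ j, (A p j * u j) • (EuclideanSpace.single p (1:ℝ) : Euc m) := by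
    rw [matCLM]
    simp only [ContinuousLinearMap.coe_sum', Finset.sum_apply, ContinuousLinearMap.coe_smul',
      Pi.smul_apply, ContinuousLinearMap.smulRight_apply, PiLp.proj_apply, smul_smul]
  rw [h1]
  rw [show (∑ p : Fin m, ∑ j, (A p j * u j) • (EuclideanSpace.single p (1:ℝ) : Euc m)) p₀
      = EuclideanSpace.proj (𝕜 := ℝ) p₀
        (∑ p : Fin m, ∑ j, (A p j * u j) • (EuclideanSpace.single p (1:ℝ) : Euc m)) from rfl,
    map_sum]
  have h3 : ∀ p : Fin m, EuclideanSpace.proj (𝕜 := ℝ) p₀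
      (∑ j, (A p j * u j) • (EuclideanSpace.single p (1:ℝ) : Euc m))
      = ∑ j, (A p j * u j) * (if p₀ = p then 1 else 0) := by
    intro p
    rw [map_sum]
    refine Finset.sum_congr rfl fun j _ => ?_
    rw [_root_.map_smul, smul_eq_mul]
    congr 1
    rw [show EuclideanSpace.proj (𝕜 := ℝ) p₀ (EuclideanSpace.single p (1:ℝ) : Euc m)
        = (EuclideanSpace.single p (1:ℝ) : Euc m) p₀ from rfl, EuclideanSpace.single_apply]
  rw [Finset.sum_congr rfl fun p _ => h3 p]
  rw [Finset.sum_comm]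
  refine Finset.sum_congr rfl fun j _ => ?_
  rw [Finset.sum_eq_single p₀] <;> simp +contextual [Ne.symm]


/-- Derivative of the graph map. -/
lemma hasFDerivAt_graph {f : Euc k → Euc m} {y : Euc k} {Df : Euc k →L[ℝ] Euc m}
    (hf : HasFDerivAt f Df y) :
    HasFDerivAt (fun z => app z (f z))
      ((appL k m).comp ((ContinuousLinearMap.id ℝ (Euc k)).prod Df)) y :=
  ((appL k m).hasFDerivAt).comp y (HasFDerivAt.prodMk (hasFDerivAt_id y) hf)

lemma graphD_apply (Df : Euc k →L[ℝ] Euc m) (u : Euc k) :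
    ((appL k m).comp ((ContinuousLinearMap.id ℝ (Euc k)).prod Df)) u = app u (Df u) := rfl

lemma app_matCLM_eq_gen (A : Fin m → Fin k → ℝ) (i : Fin k) :
    app (EuclideanSpace.single i (1:ℝ)) (matCLM A (EuclideanSpace.single i (1:ℝ))) = gen A i := by
  apply PiLp.ext
  intro i'
  induction i' using Fin.addCases with
  | left j => rw [app_castAdd, gen_apply_castAdd, EuclideanSpace.single_apply]
  | right p =>
    rw [app_natAdd, gen_apply_natAdd, matCLM_apply]
    rw [Finset.sum_eq_single i] <;> simp +contextual [EuclideanSpace.single_apply, Ne.symm]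

/-- The tangency set inside the ball is contained in the graph of the "matching" set `T`. -/
lemma tangency_subset_graph {U : Set (Euc k)} (hU : IsOpen U)
    {f : Euc k → Euc m} (hf : ContDiffOn ℝ 1 f U) {r : ℝ}
    {M : Euc (k + m) → Fin m → Fin k → ℝ}
    {V : Euc (k + m) → Submodule ℝ (Euc (k + m))}
    (hV : ∀ x ∈ ball (0 : Euc (k + m)) r,
      V x = Submodule.span ℝ (Set.range fun j : Fin k =>
        EuclideanSpace.single (Fin.castAdd m j) (1 : ℝ) +
          ∑ p : Fin m, M x p j • EuclideanSpace.single (Fin.natAdd k p) (1 : ℝ)))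
    {S : Set (Euc (k + m))} (hS : S = (fun z => app z (f z)) '' U) :
    tangencySet S V ∩ ball 0 r ⊆ (fun z => app z (f z)) ''
      {y | y ∈ U ∧ app y (f y) ∈ ball 0 r ∧ fderiv ℝ f y = matCLM (M (app y (f y)))} := by
  rintro x ⟨⟨hxS, hxtan⟩, hxball⟩
  rw [hS] at hxS
  obtain ⟨y, hyU, rfl⟩ := hxS
  refine ⟨y, ⟨hyU, hxball, ?_⟩, rfl⟩
  have hfd : DifferentiableAt ℝ f y :=
    (hf.differentiableOn one_ne_zero).differentiableAt (hU.mem_nhds hyU)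
  have hgd := hasFDerivAt_graph hfd.hasFDerivAt
  have hcone : tangentConeAt ℝ U y = univ := by
    rw [← Set.univ_inter U, tangentConeAt_inter_nhds (hU.mem_nhds hyU), tangentConeAt_univ]
  have hmaps := hgd.hasFDerivWithinAt.mapsTo_tangent_cone (s := U)
  have key : ∀ u : Euc k, ∀ p, fderiv ℝ f y u p
      = ∑ j, M (app y (f y)) p j * u j := by
    intro u p
    have h1 : app u (fderiv ℝ f y u) ∈
        tangentConeAt ℝ ((fun z => app z (f z)) '' U) (app y (f y)) := by
      rw [← graphD_apply]
      exact hmaps (by rw [hcone]; trivial)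
    rw [← hS] at h1
    rw [hxtan, hV _ hxball] at h1
    have h2 := (mem_span_iff (M (app y (f y))) _).1 h1 p
    rw [app_natAdd] at h2
    rw [h2]
    refine Finset.sum_congr rfl fun j _ => ?_
    rw [app_castAdd]
  apply ContinuousLinearMap.ext
  intro u
  apply PiLp.ext
  intro p
  rw [matCLM_apply]
  exact key u p

end Statement18Aux

open Statement18Aux

/-- Let `W = span(e₁,…,e_k) ⊆ ℝ^{k+m}`, let `U ⊆ W` be open, let
`f : U → W^⊥` be of class `C^{1,1}` and let `S` be the graph of `f`. Let `V` be a `C¹`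
distribution of `k`-planes on the ball `U(0,r)` whose planes are graphs over `W` of the
`C¹` matrix field `M`. If `V` is non-involutive at every point of `U(0,r)`, then
`ℋ^k(τ(S,V) ∩ U(0,r)) = 0`. -/


theorem statement18 {k m : ℕ}
    (U : Set (Euc k)) (hU : IsOpen U)
    (f : Euc k → Euc m) (hf : ContDiffOn ℝ 1 f U)
    (hf2 : ∃ L : ℝ≥0, LipschitzOnWith L (fderiv ℝ f) U)
    (r : ℝ) (hr : 0 < r)
    (M : Euc (k + m) → Fin m → Fin k → ℝ)
    (hM : ContDiffOn ℝ 1 M (ball 0 r))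
    (V : Euc (k + m) → Submodule ℝ (Euc (k + m)))
    (hV : ∀ x ∈ ball (0 : Euc (k + m)) r,
      V x = Submodule.span ℝ (Set.range fun j : Fin k =>
        EuclideanSpace.single (Fin.castAdd m j) (1 : ℝ) +
          ∑ p : Fin m, M x p j • EuclideanSpace.single (Fin.natAdd k p) (1 : ℝ)))
    (hni : ∀ x ∈ ball (0 : Euc (k + m)) r, ¬ InvolutiveAt (ball 0 r) V x)
    (S : Set (Euc (k + m))) (hS : S = (fun z => app z (f z)) '' U) :
    μH[(k : ℝ)] (tangencySet S V ∩ ball 0 r) = 0 := by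
  classical
  have hball : (0 : Euc (k+m)) ∈ ball (0 : Euc (k+m)) r := mem_ball_self hr
  rcases Nat.eq_zero_or_pos k with hk0 | hk
  · -- degenerate case k = 0 : the distribution is trivial, hence involutive everywhere
    subst hk0
    exfalso
    refine hni 0 hball ?_
    intro X Y hX hY hXt hYt
    have hzero : ∀ Z : Euc (0+m) → Euc (0+m), (∀ y ∈ ball (0:Euc (0+m)) r, Z y ∈ V y) →
        ∀ y ∈ ball (0:Euc (0+m)) r, Z y = 0 := by
      intro Z hZt y hy
      have h := hZt y hy
      rw [hV y hy] at h
      simpa [Set.range_eq_empty, Submodule.span_empty, Submodule.mem_bot] using h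
    have hX0 := hzero X hXt
    have hY0 := hzero Y hYt
    have hfX : fderiv ℝ X 0 = 0 := by
      have hXe : X =ᶠ[𝓝 (0:Euc (0+m))] (fun _ => (0:Euc (0+m))) :=
        Filter.eventuallyEq_of_mem (isOpen_ball.mem_nhds hball) hX0
      rw [hXe.fderiv_eq, fderiv_fun_const]
      rfl
    have hfY : fderiv ℝ Y 0 = 0 := by
      have hYe : Y =ᶠ[𝓝 (0:Euc (0+m))] (fun _ => (0:Euc (0+m))) :=
        Filter.eventuallyEq_of_mem (isOpen_ball.mem_nhds hball) hY0
      rw [hYe.fderiv_eq, fderiv_fun_const]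
      rfl
    have : lieBracket X Y 0 = 0 := by
      rw [lieBracket, hfX, hfY]
      simp
    rw [this]
    exact zero_mem _
  · -- main case k ≥ 1
    set g : Euc k → Euc (k+m) := fun z => app z (f z) with hgdef
    set T : Set (Euc k) :=
      {y | y ∈ U ∧ g y ∈ ball 0 r ∧ fderiv ℝ f y = matCLM (M (g y))} with hTdef
    have hsub : tangencySet S V ∩ ball 0 r ⊆ g '' T := tangency_subset_graph hU hf hV hS
    have hTU : T ⊆ U := fun y hy => hy.1
    have hgC1 : ContDiffOn ℝ 1 g U := by
      have h : g = fun z => appL k m (z, f z) := rfl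
      rw [h]
      exact (appL k m).contDiff.comp_contDiffOn (contDiffOn_id.prodMk hf)
    have hgc : ContinuousOn g U := hgC1.continuousOn
    -- Step 2: the matching set is Lebesgue-null
    have hvol : volume T = 0 := by
      by_contra hvol0
      -- measurability of T
      have hΩ : IsOpen (U ∩ g ⁻¹' ball 0 r) := hgc.isOpen_inter_preimage hU isOpen_ball
      have hF'c : ContinuousOn (fderiv ℝ f) U := hf.continuousOn_fderiv_of_isOpen hU le_rfl
      have hNcc : ContinuousOn (fun y => matCLM (M (g y))) (U ∩ g ⁻¹' ball 0 r) := by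
        have hMg : ContinuousOn (fun y => M (g y)) (U ∩ g ⁻¹' ball 0 r) :=
          (hM.continuousOn).comp (hgc.mono Set.inter_subset_left) (fun y hy => hy.2)
        have hcont : Continuous (fun A : Fin m → Fin k → ℝ => matCLM A) := by
          refine continuous_finset_sum _ fun p _ => continuous_finset_sum _ fun j _ => ?_
          exact (continuous_apply_apply p j).smul continuous_const
        exact hcont.comp_continuousOn hMg
      have hBopen : IsOpen ((U ∩ g ⁻¹' ball 0 r) ∩
          (fun y => fderiv ℝ f y - matCLM (M (g y))) ⁻¹' {(0 : Euc k →L[ℝ] Euc m)}ᶜ) :=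
        ContinuousOn.isOpen_inter_preimage ((hF'c.mono Set.inter_subset_left).sub hNcc) hΩ
          isOpen_compl_singleton
      have hTmeas : MeasurableSet T := by
        have hTeq : T = (U ∩ g ⁻¹' ball 0 r) \ ((U ∩ g ⁻¹' ball 0 r) ∩
            (fun y => fderiv ℝ f y - matCLM (M (g y))) ⁻¹' {(0 : Euc k →L[ℝ] Euc m)}ᶜ) := by
          ext y
          simp only [hTdef, Set.mem_setOf_eq, Set.mem_diff, Set.mem_inter_iff,
            Set.mem_preimage, Set.mem_compl_iff, Set.mem_singleton_iff, sub_eq_zero,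
            not_and, not_not]
          constructor
          · rintro ⟨h1, h2, h3⟩
            exact ⟨⟨h1, h2⟩, fun _ => h3⟩
          · rintro ⟨⟨h1, h2⟩, h3⟩
            exact ⟨h1, h2, h3 ⟨h1, h2⟩⟩
        rw [hTeq]
        exact hΩ.measurableSet.diff hBopen.measurableSet
      -- select a good point
      obtain ⟨L, hL⟩ := hf2
      have hrade : ∀ᵐ y ∂(volume : Measure (Euc k)),
          y ∈ U → DifferentiableWithinAt ℝ (fderiv ℝ f) U y :=
        hL.ae_differentiableWithinAt_of_mem
      have hdens := Besicovitch.ae_tendsto_measure_inter_div (volume : Measure (Euc k)) T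
      haveI : Filter.NeBot (ae ((volume : Measure (Euc k)).restrict T)) :=
        ae_neBot.2 (by rwa [Ne, Measure.restrict_eq_zero])
      obtain ⟨y₀, hy₀T, hy₀rad, hy₀dens⟩ :=
        ((ae_restrict_mem hTmeas).and ((ae_restrict_of_ae hrade).and hdens)).exists
      have hy₀U : y₀ ∈ U := hy₀T.1
      set x₀ := g y₀ with hx₀def
      have hx₀ : x₀ ∈ ball (0:Euc (k+m)) r := hy₀T.2.1
      -- second derivative of f at y₀ and its symmetry
      have hF'd : DifferentiableAt ℝ (fderiv ℝ f) y₀ :=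
        (hy₀rad hy₀U).differentiableAt (hU.mem_nhds hy₀U)
      set F'' := fderiv ℝ (fderiv ℝ f) y₀ with hF''def
      have hsymF : ∀ u w, F'' u w = F'' w u := by
        refine fun u w => second_derivative_symmetric_of_eventually (f := f) ?_ hF'd.hasFDerivAt u w
        filter_upwards [hU.mem_nhds hy₀U] with y hy
        exact ((hf.differentiableOn one_ne_zero).differentiableAt (hU.mem_nhds hy)).hasFDerivAt
      -- derivative of y ↦ matCLM (M (g y)) at y₀
      have hgd : HasFDerivAt g
          ((appL k m).comp ((ContinuousLinearMap.id ℝ (Euc k)).prod (fderiv ℝ f y₀))) y₀ :=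
        hasFDerivAt_graph ((hf.differentiableOn one_ne_zero).differentiableAt
          (hU.mem_nhds hy₀U)).hasFDerivAt
      set Dg := (appL k m).comp ((ContinuousLinearMap.id ℝ (Euc k)).prod (fderiv ℝ f y₀))
        with hDgdef
      set LN : Euc k →L[ℝ] (Euc k →L[ℝ] Euc m) :=
        ∑ p, ∑ j, ((fderiv ℝ (fun x => M x p j) x₀).comp Dg).smulRight
          ((EuclideanSpace.proj (𝕜 := ℝ) j).smulRight (EuclideanSpace.single p (1:ℝ)))
        with hLNdef
      have hNd : HasFDerivAt (fun y => matCLM (M (g y))) LN y₀ := by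
        have h0 : (fun y => matCLM (M (g y))) = fun y => ∑ p, ∑ j, M (g y) p j •
            ((EuclideanSpace.proj (𝕜 := ℝ) j).smulRight (EuclideanSpace.single p (1:ℝ))) := rfl
        rw [h0, hLNdef]
        refine HasFDerivAt.fun_sum fun p _ => HasFDerivAt.fun_sum fun j _ => ?_
        exact ((hMpj hM hx₀ p j).hasFDerivAt.comp y₀ hgd).smul_const
            ((EuclideanSpace.proj (𝕜 := ℝ) j).smulRight (EuclideanSpace.single p (1:ℝ)))
      -- unique differentiability of T at the density point y₀
      have hcone : tangentConeAt ℝ T y₀ = Set.univ :=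
        Set.eq_univ_iff_forall.2 (tangentCone_eq_univ_of_density hk hy₀T hy₀dens)
      have hud : UniqueDiffWithinAt ℝ T y₀ := by
        constructor
        · rw [hcone, Submodule.span_univ, Submodule.top_coe]
          exact dense_univ
        · exact subset_closure hy₀T
      have heq : F'' = LN := by
        refine hud.eq hF'd.hasFDerivAt.hasFDerivWithinAt ?_
        exact (hNd.hasFDerivWithinAt).congr (fun y hy => hy.2.2) hy₀T.2.2
      -- evaluate the second derivative on basis vectors
      have hLNmat : ∀ u : Euc k, LN u
          = matCLM (fun p j => fderiv ℝ (fun x => M x p j) x₀ (Dg u)) := by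
        intro u
        rw [hLNdef, matCLM]
        simp only [ContinuousLinearMap.coe_sum', Finset.sum_apply,
          ContinuousLinearMap.smulRight_apply, ContinuousLinearMap.coe_comp',
          Function.comp_apply]
      have hDgi : ∀ i : Fin k, Dg (EuclideanSpace.single i (1:ℝ)) = gen (M x₀) i := by
        intro i
        rw [hDgdef, graphD_apply, hy₀T.2.2, ← hx₀def, app_matCLM_eq_gen]
      have hsym : ∀ (p : Fin m) (i j : Fin k),
          fderiv ℝ (fun y => M y p j) x₀ (gen (M x₀) i)
            = fderiv ℝ (fun y => M y p i) x₀ (gen (M x₀) j) := by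
        intro p i j
        have e1 := hsymF (EuclideanSpace.single i (1:ℝ)) (EuclideanSpace.single j (1:ℝ))
        rw [heq, hLNmat, hLNmat] at e1
        have e2 := congrArg (fun w : Euc m => w p) e1
        rw [matCLM_apply, matCLM_apply] at e2
        rw [Finset.sum_eq_single j, Finset.sum_eq_single i] at e2
        · rw [EuclideanSpace.single_apply, if_pos rfl, mul_one,
            EuclideanSpace.single_apply, if_pos rfl, mul_one] at e2
          rw [← hDgi i, ← hDgi j]
          exact e2
        · intro b _ hb
          rw [EuclideanSpace.single_apply, if_neg hb, mul_zero]
        · simp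
        · intro b _ hb
          rw [EuclideanSpace.single_apply, if_neg hb, mul_zero]
        · simp
      exact absurd (involutive_of_symm hM hV hx₀ hsym) (hni x₀ hx₀)
    -- Step 3: transfer to Hausdorff measure
    have h1 : μH[(k:ℝ)] T = 0 := hausdorff_null_of_volume_null hvol
    have h2 : μH[(k:ℝ)] (g '' T) = 0 := hausdorff_image_null hU hgC1 hTU h1
    exact le_antisymm (le_trans (measure_mono hsub) h2.le) (zero_le)
end
end
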